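/- arXiv:1403.0777 — 2 statements merged into one kernel-verified Lean document; each statement's English description precedes it below -/
import Mathlib

section
/- (Theorem 1.1) Let γ : I → ℝ⁴₁ be a smooth null Cartan curve parametrized by pseudo-arc, and define k₂(t) = −det(γ'(t), γ''(t), γ'''(t), γ⁽⁴⁾(t)). Then γ is a pseudo-spherical curve (i.e., there exist a point m ∈ ℝ⁴ and a real number r > 0 such that ⟨γ(t) − m, γ(t) − m⟩ = r² for all t ∈ I) if and only if k₂ is a nonzero constant function. -/
noncomputable section

/-- The pseudo scalar product of Minkowski 4-space `ℝ⁴₁`: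
`⟨x,y⟩ = -x₁y₁ + x₂y₂ + x₃y₃ + x₄y₄`. -/
def mink (x y : Fin 4 → ℝ) : ℝ :=
  -(x 0 * y 0) + x 1 * y 1 + x 2 * y 2 + x 3 * y 3

namespace MinkAux

open Matrix

def M4 (a b c d : Fin 4 → ℝ) : Matrix (Fin 4) (Fin 4) ℝ := Matrix.of ![a,b,c,d]

lemma det_M4 (a b c d : Fin 4 → ℝ) : (M4 a b c d).det =
    a 0 * (b 1 * (c 2 * d 3 - c 3 * d 2) - b 2 * (c 1 * d 3 - c 3 * d 1) + b 3 * (c 1 * d 2 - c 2 * d 1))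
  - a 1 * (b 0 * (c 2 * d 3 - c 3 * d 2) - b 2 * (c 0 * d 3 - c 3 * d 0) + b 3 * (c 0 * d 2 - c 2 * d 0))
  + a 2 * (b 0 * (c 1 * d 3 - c 3 * d 1) - b 1 * (c 0 * d 3 - c 3 * d 0) + b 3 * (c 0 * d 1 - c 1 * d 0))
  - a 3 * (b 0 * (c 1 * d 2 - c 2 * d 1) - b 1 * (c 0 * d 2 - c 2 * d 0) + b 2 * (c 0 * d 1 - c 1 * d 0)) := by
  simp [M4, Matrix.det_succ_row_zero, Fin.sum_univ_succ,
    show ((2 : Fin 4).succAbove 2 : Fin 4) = 3 by decide,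
    show ((1 : Fin 4).succAbove 2 : Fin 4) = 3 by decide,
    show (Fin.castSucc 2 : Fin 4) = 2 by decide,
    show (Fin.succ 2 : Fin 4) = 3 by decide,
    show ((3 : Fin 4).succAbove 2 : Fin 4) = 2 by decide]
  ring

lemma det_rep01 (x b c : Fin 4 → ℝ) : (M4 x x b c).det = 0 := by rw [det_M4]; ring
lemma det_rep02 (x b c : Fin 4 → ℝ) : (M4 x b x c).det = 0 := by rw [det_M4]; ring
lemma det_rep03 (x b c : Fin 4 → ℝ) : (M4 x b c x).det = 0 := by rw [det_M4]; ring
lemma det_rep12 (a x c : Fin 4 → ℝ) : (M4 a x x c).det = 0 := by rw [det_M4]; ring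
lemma det_rep13 (a x c : Fin 4 → ℝ) : (M4 a x c x).det = 0 := by rw [det_M4]; ring
lemma det_rep23 (a b x : Fin 4 → ℝ) : (M4 a b x x).det = 0 := by rw [det_M4]; ring
lemma det_zero3 (a b c : Fin 4 → ℝ) : (M4 a b c 0).det = 0 := by
  rw [det_M4]; simp
lemma det_swap23 (a b x y : Fin 4 → ℝ) : (M4 a b x y).det = -(M4 a b y x).det := by
  rw [det_M4, det_M4]; ring

lemma det_bound (m : Fin 4 → (Fin 4 → ℝ)) :
    ‖Matrix.detRowAlternating (Matrix.of m)‖ ≤ 24 * ∏ i, ‖m i‖ := by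
  rw [show (Matrix.detRowAlternating (Matrix.of m) : ℝ) = (Matrix.of m).det from rfl,
    Matrix.det_apply']
  calc ‖∑ σ : Equiv.Perm (Fin 4), (Equiv.Perm.sign σ : ℝ) * ∏ i, Matrix.of m (σ i) i‖
      ≤ ∑ σ : Equiv.Perm (Fin 4), ‖(Equiv.Perm.sign σ : ℝ) * ∏ i, Matrix.of m (σ i) i‖ :=
        norm_sum_le _ _
    _ ≤ ∑ _σ : Equiv.Perm (Fin 4), ∏ i, ‖m i‖ := by
        apply Finset.sum_le_sum
        intro σ _
        rw [norm_mul]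
        have h1 : ‖(Equiv.Perm.sign σ : ℝ)‖ = 1 := by
          rcases Int.units_eq_one_or (Equiv.Perm.sign σ) with h | h <;> simp [h]
        rw [h1, one_mul]
        calc ‖∏ i, Matrix.of m (σ i) i‖ ≤ ∏ i, ‖m (σ i)‖ := by
              rw [norm_prod]
              apply Finset.prod_le_prod (fun _ _ => norm_nonneg _)
              intro i _
              exact norm_le_pi_norm (m (σ i)) i
          _ = ∏ i, ‖m i‖ := Equiv.prod_comp σ (fun i => ‖m i‖)
    _ = 24 * ∏ i, ‖m i‖ := by
        rw [Finset.sum_const, Finset.card_univ, Fintype.card_perm]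
        norm_num [Nat.factorial]

def detC : ContinuousMultilinearMap ℝ (fun _ : Fin 4 => (Fin 4 → ℝ)) ℝ :=
  MultilinearMap.mkContinuous
    ((Matrix.detRowAlternating : (Fin 4 → ℝ) [⋀^Fin 4]→ₗ[ℝ] ℝ)).toMultilinearMap
    24 (fun m => det_bound m)

lemma detC_apply (m : Fin 4 → (Fin 4 → ℝ)) : detC m = (Matrix.of m).det := rfl

lemma update_vec0 {α : Type*} (w x y z v : α) :
    Function.update ![w,x,y,z] (0 : Fin 4) v = ![v,x,y,z] := by
  funext i; fin_cases i <;> simp [Function.update]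
lemma update_vec1 {α : Type*} (w x y z v : α) :
    Function.update ![w,x,y,z] (1 : Fin 4) v = ![w,v,y,z] := by
  funext i; fin_cases i <;> simp [Function.update]
lemma update_vec2 {α : Type*} (w x y z v : α) :
    Function.update ![w,x,y,z] (2 : Fin 4) v = ![w,x,v,z] := by
  funext i; fin_cases i <;> simp [Function.update]
lemma update_vec3 {α : Type*} (w x y z v : α) :
    Function.update ![w,x,y,z] (3 : Fin 4) v = ![w,x,y,v] := by
  funext i; fin_cases i <;> simp [Function.update]

lemma vec_app (a b c d : ℝ → Fin 4 → ℝ) (s : ℝ) :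
    (fun i => (![a,b,c,d] : Fin 4 → ℝ → Fin 4 → ℝ) i s) = ![a s, b s, c s, d s] := by
  funext i; fin_cases i <;> rfl

set_option maxHeartbeats 1000000 in
lemma hasDerivAt_det4 {a b c d : ℝ → Fin 4 → ℝ} {a' b' c' d' : Fin 4 → ℝ} {t : ℝ}
    (ha : HasDerivAt a a' t) (hb : HasDerivAt b b' t)
    (hc : HasDerivAt c c' t) (hd : HasDerivAt d d' t) :
    HasDerivAt (fun s => (M4 (a s) (b s) (c s) (d s)).det)
      ((M4 a' (b t) (c t) (d t)).det + (M4 (a t) b' (c t) (d t)).det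
        + (M4 (a t) (b t) c' (d t)).det + (M4 (a t) (b t) (c t) d').det) t := by
  have H := HasFDerivAt.multilinear_comp (f := detC) (g := ![a,b,c,d])
    (g' := ![(ContinuousLinearMap.smulRight (1 : ℝ →L[ℝ] ℝ) a'),
      (ContinuousLinearMap.smulRight (1 : ℝ →L[ℝ] ℝ) b'),
      (ContinuousLinearMap.smulRight (1 : ℝ →L[ℝ] ℝ) c'),
      (ContinuousLinearMap.smulRight (1 : ℝ →L[ℝ] ℝ) d')]) (x := t)
    (by
      intro i
      fin_cases i
      · exact ha.hasFDerivAt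
      · exact hb.hasFDerivAt
      · exact hc.hasFDerivAt
      · exact hd.hasFDerivAt)
  have H2 := H.hasDerivAt
  have hfun : (fun s => (M4 (a s) (b s) (c s) (d s)).det)
      = (fun x => detC fun i => (![a,b,c,d] : Fin 4 → ℝ → Fin 4 → ℝ) i x) := by
    funext s
    rw [vec_app, detC_apply]
    rfl
  rw [hfun]
  convert H2 using 1
  · rfl
  · rfl
  · rw [ContinuousLinearMap.sum_apply, Fin.sum_univ_four]
    simp only [ContinuousLinearMap.comp_apply,
      ContinuousMultilinearMap.toContinuousLinearMap_apply,
      ContinuousLinearMap.smulRight_apply, ContinuousLinearMap.one_apply, one_smul,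
      Matrix.cons_val_zero, Matrix.cons_val_one, Matrix.head_cons,
      Matrix.cons_val_two, Matrix.tail_cons, Matrix.cons_val_three]
    rw [vec_app, update_vec0, update_vec1, update_vec2, update_vec3,
      detC_apply, detC_apply, detC_apply, detC_apply]
    rfl

lemma mink_hasDerivAt {f g : ℝ → Fin 4 → ℝ} {f' g' : Fin 4 → ℝ} {t : ℝ}
    (hf : HasDerivAt f f' t) (hg : HasDerivAt g g' t) :
    HasDerivAt (fun s => mink (f s) (g s)) (mink f' (g t) + mink (f t) g') t := by
  have hfi := fun i => (hasDerivAt_pi.1 hf) i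
  have hgi := fun i => (hasDerivAt_pi.1 hg) i
  have h0 := ((hfi 0).mul (hgi 0)).neg
  have h1 := (hfi 1).mul (hgi 1)
  have h2 := (hfi 2).mul (hgi 2)
  have h3 := (hfi 3).mul (hgi 3)
  have H := ((h0.add h1).add h2).add h3
  convert H using 1
  · rfl
  · rfl
  · rfl
  simp only [mink]; ring

lemma mink_symm (x y : Fin 4 → ℝ) : mink x y = mink y x := by simp only [mink]; ring

def ew (w : Fin 4 → ℝ) : Fin 4 → ℝ := ![-(w 0), w 1, w 2, w 3]

lemma eq_zero_of_mink_perp {w0 w1 w2 w3 v : Fin 4 → ℝ}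
    (hdet : (M4 w0 w1 w2 w3).det ≠ 0)
    (h0 : mink w0 v = 0) (h1 : mink w1 v = 0) (h2 : mink w2 v = 0) (h3 : mink w3 v = 0) :
    v = 0 := by
  set A := M4 (ew w0) (ew w1) (ew w2) (ew w3) with hA
  have hdetA : A.det ≠ 0 := by
    have : A.det = -(M4 w0 w1 w2 w3).det := by
      rw [hA, det_M4, det_M4]; simp only [ew]; simp; ring
    rw [this]; simpa using hdet
  have hunit : IsUnit A := (Matrix.isUnit_iff_isUnit_det A).2 (isUnit_iff_ne_zero.2 hdetA)
  simp only [mink] at h0 h1 h2 h3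
  have e0 : (A *ᵥ v) 0 = 0 := by
    simp [hA, M4, Matrix.mulVec, dotProduct, Fin.sum_univ_four, ew]; linarith [h0]
  have e1 : (A *ᵥ v) 1 = 0 := by
    simp [hA, M4, Matrix.mulVec, dotProduct, Fin.sum_univ_four, ew]; linarith [h1]
  have e2 : (A *ᵥ v) 2 = 0 := by
    simp [hA, M4, Matrix.mulVec, dotProduct, Fin.sum_univ_four, ew]; linarith [h2]
  have e3 : (A *ᵥ v) 3 = 0 := by
    simp [hA, M4, Matrix.mulVec, dotProduct, Fin.sum_univ_four, ew]; linarith [h3]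
  have hAv : A *ᵥ v = 0 := by
    funext i
    fin_cases i
    · exact e0
    · exact e1
    · exact e2
    · exact e3
  have hinj := Matrix.mulVec_injective_iff_isUnit.2 hunit
  have : A *ᵥ v = A *ᵥ 0 := by rw [hAv, Matrix.mulVec_zero]
  exact hinj this

lemma exists_comb {v1 v2 v3 x : Fin 4 → ℝ}
    (h3 : LinearIndependent ℝ ![v1,v2,v3]) (hdet : (M4 v1 v2 v3 x).det = 0) :
    ∃ a b c : ℝ, x = a • v1 + b • v2 + c • v3 := by
  have hmem : x ∈ Submodule.span ℝ (Set.range ![v1,v2,v3]) := by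
    by_contra hmem
    have hli : LinearIndependent ℝ (Fin.snoc ![v1,v2,v3] x : Fin 4 → (Fin 4 → ℝ)) :=
      linearIndependent_fin_snoc.2 ⟨h3, hmem⟩
    have heq : (Fin.snoc ![v1,v2,v3] x : Fin 4 → (Fin 4 → ℝ)) = ![v1,v2,v3,x] := by
      funext i; fin_cases i <;> rfl
    rw [heq] at hli
    have hunit : IsUnit (M4 v1 v2 v3 x) :=
      Matrix.linearIndependent_rows_iff_isUnit.1 hli
    exact (((Matrix.isUnit_iff_isUnit_det _).1 hunit).ne_zero) hdet
  rcases (Submodule.mem_span_range_iff_exists_fun ℝ).1 hmem with ⟨c, hc⟩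
  exact ⟨c 0, c 1, c 2, by rw [← hc, Fin.sum_univ_three]; simp⟩

lemma posP {v w : Fin 4 → ℝ} (hw : mink w w < 0) (hvw : mink v w = 0) (hv : mink v v ≤ 0) :
    v = 0 := by
  simp only [mink] at hw hvw hv
  have cs : (v 1*w 1+v 2*w 2+v 3*w 3)^2 ≤ (v 1^2+v 2^2+v 3^2)*(w 1^2+w 2^2+w 3^2) := by
    nlinarith [sq_nonneg (v 1*w 2 - v 2*w 1), sq_nonneg (v 1*w 3 - v 3*w 1),
      sq_nonneg (v 2*w 3 - v 3*w 2)]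
  have hside : v 1^2+v 2^2+v 3^2 ≤ v 0^2 := by nlinarith
  have hwside : w 1^2+w 2^2+w 3^2 < w 0^2 := by nlinarith
  have hvw' : v 0 * w 0 = v 1*w 1+v 2*w 2+v 3*w 3 := by linarith
  have hwnn : (0:ℝ) ≤ w 1^2+w 2^2+w 3^2 := by positivity
  have key : v 0^2*w 0^2 ≤ v 0^2*(w 1^2+w 2^2+w 3^2) := by
    calc v 0^2*w 0^2 = (v 0*w 0)^2 := by ring
    _ = (v 1*w 1+v 2*w 2+v 3*w 3)^2 := by rw [hvw']
    _ ≤ (v 1^2+v 2^2+v 3^2)*(w 1^2+w 2^2+w 3^2) := cs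
    _ ≤ v 0^2*(w 1^2+w 2^2+w 3^2) := mul_le_mul_of_nonneg_right hside hwnn
  have hv0 : v 0 = 0 := by
    by_contra h
    have hpos : 0 < v 0^2 := by
      rcases (sq_nonneg (v 0)).lt_or_eq with h' | h'
      · exact h'
      · exact absurd ((pow_eq_zero_iff two_ne_zero).1 h'.symm) h
    have := mul_lt_mul_of_pos_left hwside hpos
    linarith
  have h0sq : v 0 ^ 2 = 0 := by rw [hv0]; ring
  have h1 : v 1 = 0 := (pow_eq_zero_iff two_ne_zero).1 (le_antisymm
    (by linarith [sq_nonneg (v 2), sq_nonneg (v 3)]) (sq_nonneg _))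
  have h2 : v 2 = 0 := (pow_eq_zero_iff two_ne_zero).1 (le_antisymm
    (by linarith [sq_nonneg (v 1), sq_nonneg (v 3)]) (sq_nonneg _))
  have h3 : v 3 = 0 := (pow_eq_zero_iff two_ne_zero).1 (le_antisymm
    (by linarith [sq_nonneg (v 1), sq_nonneg (v 2)]) (sq_nonneg _))
  funext i
  fin_cases i <;> simp [hv0, h1, h2, h3]

/-- derivative of a constant real function is zero (uniqueness form) -/
lemma val_eq_zero_of_const {F : ℝ → ℝ} {c : ℝ} (h : ∀ s, F s = c) {v t : ℝ}
    (hd : HasDerivAt F v t) : v = 0 := by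
  have hF : F = fun _ => c := funext h
  rw [hF] at hd
  exact hd.unique (hasDerivAt_const t c)

lemma mink_cross (a b c x : Fin 4 → ℝ) :
    mink x ![-(M4 a b c ![1,0,0,0]).det, (M4 a b c ![0,1,0,0]).det,
      (M4 a b c ![0,0,1,0]).det, (M4 a b c ![0,0,0,1]).det] = (M4 a b c x).det := by
  simp only [mink, det_M4]
  simp
  ring

lemma mink_smul (s : ℝ) (x y : Fin 4 → ℝ) : mink x (s • y) = s * mink x y := by
  simp only [mink, Pi.smul_apply, smul_eq_mul]; ring
lemma mink_sub (x u v : Fin 4 → ℝ) : mink x (u - v) = mink x u - mink x v := by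
  simp only [mink, Pi.sub_apply]; ring
lemma mink_zero_right (x : Fin 4 → ℝ) : mink x 0 = 0 := by simp [mink]
lemma mink_comb (x u v w : Fin 4 → ℝ) (a b c : ℝ) :
    mink (a•u+b•v+c•w) x = a*mink u x + b*mink v x + c*mink w x := by
  simp only [mink, Pi.add_apply, Pi.smul_apply, smul_eq_mul]; ring
lemma M4_eq (a b c d : Fin 4 → ℝ) : Matrix.of ![a,b,c,d] = M4 a b c d := rfl

end MinkAux


open MinkAux

/-- Theorem 1.1: a null Cartan curve parametrized by pseudo-arc is
pseudo-spherical iff its second Cartan curvature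
`k₂ = -det(γ', γ'', γ''', γ⁽⁴⁾)` is a nonzero constant. -/
theorem pseudoSpherical_iff_k2_const (γ : ℝ → (Fin 4 → ℝ))
    (hγ : ContDiff ℝ (⊤ : ℕ∞) γ)
    (hnull : ∀ t, mink (deriv γ t) (deriv γ t) = 0)
    (hpseudoArc : ∀ t,
      mink (deriv (deriv γ) t) (deriv (deriv γ) t) = 1)
    (hCartan : ∀ t, LinearIndependent ℝ
      ![deriv γ t, deriv (deriv γ) t, deriv (deriv (deriv γ)) t])
    (k₂ : ℝ → ℝ)
    (hk₂ : ∀ t, k₂ t = -Matrix.det (Matrix.of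
      ![deriv γ t, deriv (deriv γ) t, deriv (deriv (deriv γ)) t,
        deriv (deriv (deriv (deriv γ))) t])) :
    (∃ m : Fin 4 → ℝ, ∃ r : ℝ, 0 < r ∧
        ∀ t, mink (γ t - m) (γ t - m) = r ^ 2) ↔
      (∃ c : ℝ, c ≠ 0 ∧ ∀ t, k₂ t = c) := by
  classical
  set g1 := deriv γ with hg1def
  set g2 := deriv g1 with hg2def
  set g3 := deriv g2 with hg3def
  set g4 := deriv g3 with hg4def
  set g5 := deriv g4 with hg5def
  have hγ' : ContDiff ℝ ((⊤ : ℕ∞) : WithTop ℕ∞) γ := hγ.of_le (by simp)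
  have hsm1 : ContDiff ℝ ((⊤ : ℕ∞) : WithTop ℕ∞) g1 := (contDiff_infty_iff_deriv.mp hγ').2
  have hsm2 : ContDiff ℝ ((⊤ : ℕ∞) : WithTop ℕ∞) g2 := (contDiff_infty_iff_deriv.mp hsm1).2
  have hsm3 : ContDiff ℝ ((⊤ : ℕ∞) : WithTop ℕ∞) g3 := (contDiff_infty_iff_deriv.mp hsm2).2
  have hsm4 : ContDiff ℝ ((⊤ : ℕ∞) : WithTop ℕ∞) g4 := (contDiff_infty_iff_deriv.mp hsm3).2
  have hdγ : ∀ t, HasDerivAt γ (g1 t) t := fun t => (hγ'.differentiable (by simp) t).hasDerivAt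
  have hd1 : ∀ t, HasDerivAt g1 (g2 t) t := fun t => (hsm1.differentiable (by simp) t).hasDerivAt
  have hd2 : ∀ t, HasDerivAt g2 (g3 t) t := fun t => (hsm2.differentiable (by simp) t).hasDerivAt
  have hd3 : ∀ t, HasDerivAt g3 (g4 t) t := fun t => (hsm3.differentiable (by simp) t).hasDerivAt
  have hd4 : ∀ t, HasDerivAt g4 (g5 t) t := fun t => (hsm4.differentiable (by simp) t).hasDerivAt
  -- basic scalar identities
  have E2 : ∀ t, mink (g2 t) (g1 t) = 0 := by
    intro t
    have hD := mink_hasDerivAt (hd1 t) (hd1 t)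
    have h0 := val_eq_zero_of_const hnull hD
    have hs := mink_symm (g1 t) (g2 t)
    linarith
  have E4 : ∀ t, mink (g3 t) (g1 t) = -1 := by
    intro t
    have hD := mink_hasDerivAt (hd2 t) (hd1 t)
    have h0 := val_eq_zero_of_const E2 hD
    have := hpseudoArc t
    linarith
  have E5 : ∀ t, mink (g3 t) (g2 t) = 0 := by
    intro t
    have hD := mink_hasDerivAt (hd2 t) (hd2 t)
    have h0 := val_eq_zero_of_const hpseudoArc hD
    have hs := mink_symm (g2 t) (g3 t)
    linarith
  have E6 : ∀ t, mink (g4 t) (g1 t) = 0 := by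
    intro t
    have hD := mink_hasDerivAt (hd3 t) (hd1 t)
    have h0 := val_eq_zero_of_const E4 hD
    have := E5 t
    linarith
  constructor
  · rintro ⟨m, r, hr, hsph⟩
    set δ : ℝ → Fin 4 → ℝ := fun t => γ t - m with hδdef
    have hdδ : ∀ t, HasDerivAt δ (g1 t) t := fun t => (hdγ t).sub_const m
    have hsphδ : ∀ t, mink (δ t) (δ t) = r ^ 2 := hsph
    have d1 : ∀ t, mink (g1 t) (δ t) = 0 := by
      intro t
      have hD := mink_hasDerivAt (hdδ t) (hdδ t)
      have h0 := val_eq_zero_of_const hsphδ hD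
      have hs := mink_symm (δ t) (g1 t)
      linarith
    have d2 : ∀ t, mink (g2 t) (δ t) = 0 := by
      intro t
      have hD := mink_hasDerivAt (hd1 t) (hdδ t)
      have h0 := val_eq_zero_of_const d1 hD
      have := hnull t
      linarith
    have d3 : ∀ t, mink (g3 t) (δ t) = 0 := by
      intro t
      have hD := mink_hasDerivAt (hd2 t) (hdδ t)
      have h0 := val_eq_zero_of_const d2 hD
      have := E2 t
      linarith
    have d4 : ∀ t, mink (g4 t) (δ t) = 1 := by
      intro t
      have hD := mink_hasDerivAt (hd3 t) (hdδ t)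
      have h0 := val_eq_zero_of_const d3 hD
      have := E4 t
      linarith
    have d5 : ∀ t, mink (g5 t) (δ t) = 0 := by
      intro t
      have hD := mink_hasDerivAt (hd4 t) (hdδ t)
      have h0 := val_eq_zero_of_const d4 hD
      have := E6 t
      linarith
    have hδne : ∀ t, δ t ≠ 0 := by
      intro t h
      have hs := hsphδ t
      rw [h] at hs
      simp only [mink, Pi.zero_apply] at hs
      nlinarith [hr]
    have hz : ∀ t, (M4 (g1 t) (g2 t) (g3 t) (g5 t)).det = 0 := by
      intro t
      by_contra h
      exact hδne t (eq_zero_of_mink_perp h (d1 t) (d2 t) (d3 t) (d5 t))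
    have hkfun : k₂ = fun t => -((M4 (g1 t) (g2 t) (g3 t) (g4 t)).det) := funext hk₂
    have hkd : ∀ t, HasDerivAt k₂ 0 t := by
      intro t
      rw [hkfun]
      have hD := (hasDerivAt_det4 (hd1 t) (hd2 t) (hd3 t) (hd4 t)).neg
      convert hD using 1
      · rfl
      · rfl
      · rfl
      rw [det_rep01, det_rep12, det_rep23, hz t]
      norm_num
    have hconst : ∀ t, k₂ t = k₂ 0 := fun t =>
      is_const_of_deriv_eq_zero (fun s => (hkd s).differentiableAt)
        (fun s => (hkd s).deriv) t 0
    refine ⟨k₂ 0, ?_, hconst⟩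
    intro h0
    have hdet0 : (M4 (g1 0) (g2 0) (g3 0) (g4 0)).det = 0 := by
      have hh := hk₂ 0
      rw [h0] at hh
      rw [M4_eq] at hh
      linarith
    rcases exists_comb (hCartan 0) hdet0 with ⟨a, b, cc, hcomb⟩
    have h1 : mink (g4 0) (δ 0) =
        a * mink (g1 0) (δ 0) + b * mink (g2 0) (δ 0) + cc * mink (g3 0) (δ 0) := by
      rw [hcomb]
      exact mink_comb (δ 0) (g1 0) (g2 0) (g3 0) a b cc
    rw [d4 0, d1 0, d2 0, d3 0] at h1
    norm_num at h1
  · rintro ⟨c, hc, hkc⟩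
    have hdet : ∀ t, (M4 (g1 t) (g2 t) (g3 t) (g4 t)).det = -c := by
      intro t
      have h := hk₂ t
      rw [hkc t, M4_eq] at h
      linarith
    have hdetne : ∀ t, (M4 (g1 t) (g2 t) (g3 t) (g4 t)).det ≠ 0 := by
      intro t
      rw [hdet t]
      simpa using hc
    set δ : ℝ → Fin 4 → ℝ := fun t => (-(c⁻¹)) •
      ![-(M4 (g1 t) (g2 t) (g3 t) ![1,0,0,0]).det, (M4 (g1 t) (g2 t) (g3 t) ![0,1,0,0]).det,
        (M4 (g1 t) (g2 t) (g3 t) ![0,0,1,0]).det, (M4 (g1 t) (g2 t) (g3 t) ![0,0,0,1]).det]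
      with hδdef
    -- value of mink against δ
    have dm : ∀ t (x : Fin 4 → ℝ), mink x (δ t) = (-(c⁻¹)) * (M4 (g1 t) (g2 t) (g3 t) x).det := by
      intro t x
      rw [hδdef]
      rw [mink_smul, mink_cross]
    have dm1 : ∀ t, mink (g1 t) (δ t) = 0 := by
      intro t; rw [dm t, det_rep03]; ring
    have dm2 : ∀ t, mink (g2 t) (δ t) = 0 := by
      intro t; rw [dm t, det_rep13]; ring
    have dm3 : ∀ t, mink (g3 t) (δ t) = 0 := by
      intro t; rw [dm t, det_rep23]; ring
    have dm4 : ∀ t, mink (g4 t) (δ t) = 1 := by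
      intro t; rw [dm t, hdet t]; field_simp
    -- derivative of δ is g1
    have hδd : ∀ t, HasDerivAt δ (g1 t) t := by
      intro t
      have comp0 : HasDerivAt (fun s => -(M4 (g1 s) (g2 s) (g3 s) ![1,0,0,0]).det)
          (-(M4 (g1 t) (g2 t) (g4 t) ![1,0,0,0]).det) t := by
        have hD := (hasDerivAt_det4 (hd1 t) (hd2 t) (hd3 t) (hasDerivAt_const t ![1,0,0,0])).neg
        convert hD using 1
        · rfl
        · rfl
        · rfl
        rw [det_rep01, det_rep12, det_zero3]
        ring
      have comp1 : HasDerivAt (fun s => (M4 (g1 s) (g2 s) (g3 s) ![0,1,0,0]).det)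
          ((M4 (g1 t) (g2 t) (g4 t) ![0,1,0,0]).det) t := by
        have hD := hasDerivAt_det4 (hd1 t) (hd2 t) (hd3 t) (hasDerivAt_const t ![0,1,0,0])
        convert hD using 1
        rw [det_rep01, det_rep12, det_zero3]
        ring
      have comp2 : HasDerivAt (fun s => (M4 (g1 s) (g2 s) (g3 s) ![0,0,1,0]).det)
          ((M4 (g1 t) (g2 t) (g4 t) ![0,0,1,0]).det) t := by
        have hD := hasDerivAt_det4 (hd1 t) (hd2 t) (hd3 t) (hasDerivAt_const t ![0,0,1,0])
        convert hD using 1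
        rw [det_rep01, det_rep12, det_zero3]
        ring
      have comp3 : HasDerivAt (fun s => (M4 (g1 s) (g2 s) (g3 s) ![0,0,0,1]).det)
          ((M4 (g1 t) (g2 t) (g4 t) ![0,0,0,1]).det) t := by
        have hD := hasDerivAt_det4 (hd1 t) (hd2 t) (hd3 t) (hasDerivAt_const t ![0,0,0,1])
        convert hD using 1
        rw [det_rep01, det_rep12, det_zero3]
        ring
      have hwv : HasDerivAt (fun s =>
          (![-(M4 (g1 s) (g2 s) (g3 s) ![1,0,0,0]).det, (M4 (g1 s) (g2 s) (g3 s) ![0,1,0,0]).det,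
            (M4 (g1 s) (g2 s) (g3 s) ![0,0,1,0]).det, (M4 (g1 s) (g2 s) (g3 s) ![0,0,0,1]).det]
            : Fin 4 → ℝ))
          (![-(M4 (g1 t) (g2 t) (g4 t) ![1,0,0,0]).det, (M4 (g1 t) (g2 t) (g4 t) ![0,1,0,0]).det,
            (M4 (g1 t) (g2 t) (g4 t) ![0,0,1,0]).det, (M4 (g1 t) (g2 t) (g4 t) ![0,0,0,1]).det]) t := by
        apply hasDerivAt_pi.2
        intro i
        fin_cases i
        · exact comp0
        · exact comp1
        · exact comp2
        · exact comp3
      have hsd := hwv.const_smul (-(c⁻¹))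
      set v' : Fin 4 → ℝ := (-(c⁻¹)) •
        ![-(M4 (g1 t) (g2 t) (g4 t) ![1,0,0,0]).det, (M4 (g1 t) (g2 t) (g4 t) ![0,1,0,0]).det,
          (M4 (g1 t) (g2 t) (g4 t) ![0,0,1,0]).det, (M4 (g1 t) (g2 t) (g4 t) ![0,0,0,1]).det]
        with hv'def
      have hveq : v' = g1 t := by
        have dmx : ∀ x : Fin 4 → ℝ, mink x v' = (-(c⁻¹)) * (M4 (g1 t) (g2 t) (g4 t) x).det := by
          intro x
          rw [hv'def, mink_smul, mink_cross]
        have p1 : mink (g1 t) (v' - g1 t) = 0 := by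
          rw [mink_sub, dmx, det_rep03, hnull t]; ring
        have p2 : mink (g2 t) (v' - g1 t) = 0 := by
          rw [mink_sub, dmx, det_rep13, E2 t]; ring
        have p3 : mink (g3 t) (v' - g1 t) = 0 := by
          rw [mink_sub, dmx, det_swap23, hdet t, E4 t]
          field_simp
          norm_num
        have p4 : mink (g4 t) (v' - g1 t) = 0 := by
          rw [mink_sub, dmx, det_rep23, E6 t]; ring
        have hzero := eq_zero_of_mink_perp (hdetne t) p1 p2 p3 p4
        have := sub_eq_zero.1 hzero
        exact this
      rw [hveq] at hsd
      exact hsd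
    -- γ - δ is constant
    have hGd : ∀ t, HasDerivAt (fun s => γ s - δ s) 0 t := by
      intro t
      have := (hdγ t).sub (hδd t)
      rw [sub_self] at this
      exact this
    have hGc : ∀ t, γ t - δ t = γ 0 - δ 0 := fun t =>
      is_const_of_deriv_eq_zero (fun s => (hGd s).differentiableAt)
        (fun s => (hGd s).deriv) t 0
    -- mink (δ t) (δ t) is constant
    have hFd : ∀ t, HasDerivAt (fun s => mink (δ s) (δ s)) 0 t := by
      intro t
      have hD := mink_hasDerivAt (hδd t) (hδd t)
      have hs := mink_symm (δ t) (g1 t)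
      have h1 := dm1 t
      rw [show mink (g1 t) (δ t) + mink (δ t) (g1 t) = 0 by linarith] at hD
      exact hD
    have hFc : ∀ t, mink (δ t) (δ t) = mink (δ 0) (δ 0) := fun t =>
      is_const_of_deriv_eq_zero (fun s => (hFd s).differentiableAt)
        (fun s => (hFd s).deriv) t 0
    -- positivity
    have hpos : 0 < mink (δ 0) (δ 0) := by
      by_contra hle
      push_neg at hle
      set w : Fin 4 → ℝ := g3 0 + ((mink (g3 0) (g3 0) + 1)/2) • g1 0 with hwdef
      have hww : mink w w = -1 := by
        have hexp : mink w w = mink (g3 0) (g3 0)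
            + ((mink (g3 0) (g3 0) + 1)/2) * mink (g3 0) (g1 0)
            + ((mink (g3 0) (g3 0) + 1)/2) * mink (g1 0) (g3 0)
            + ((mink (g3 0) (g3 0) + 1)/2) * ((mink (g3 0) (g3 0) + 1)/2) * mink (g1 0) (g1 0) := by
          rw [hwdef]
          simp only [mink, Pi.add_apply, Pi.smul_apply, smul_eq_mul]
          ring
        rw [hexp, E4 0, mink_symm (g1 0) (g3 0), E4 0, hnull 0]
        ring
      have hδw : mink (δ 0) w = 0 := by
        have hexp : mink (δ 0) w = mink (δ 0) (g3 0)
            + ((mink (g3 0) (g3 0) + 1)/2) * mink (δ 0) (g1 0) := by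
          rw [hwdef]
          simp only [mink, Pi.add_apply, Pi.smul_apply, smul_eq_mul]
          ring
        rw [hexp, mink_symm (δ 0) (g3 0), dm3 0, mink_symm (δ 0) (g1 0), dm1 0]
        ring
      have hδ0 : δ 0 = 0 := posP (by rw [hww]; norm_num) hδw hle
      have h4 := dm4 0
      rw [hδ0, mink_zero_right] at h4
      norm_num at h4
    refine ⟨γ 0 - δ 0, Real.sqrt (mink (δ 0) (δ 0)), Real.sqrt_pos.2 hpos, ?_⟩
    intro t
    have hγm : γ t - (γ 0 - δ 0) = δ t := by
      have h := hGc t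
      rw [← h]
      abel
    rw [hγm, hFc t, Real.sq_sqrt hpos.le]
end
end

section
/- (Theorem 1.2) Let γ : I → ℝ⁴₁ be a smooth null Cartan curve parametrized by pseudo-arc. Then γ fully lies on a pseudo-sphere (i.e., there exist a point m ∈ ℝ⁴ and a real number r > 0 such that ⟨γ(t) − m, γ(t) − m⟩ = r² for all t ∈ I) if and only if there exists a fixed point A ∈ ℝ⁴ such that ⟨A − γ(t), γ'(t)⟩ = 0 for all t ∈ I. -/
noncomputable section

lemma hasDerivAt_mink {u v : ℝ → Fin 4 → ℝ} {u' v' : Fin 4 → ℝ} {t : ℝ}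
    (hu : HasDerivAt u u' t) (hv : HasDerivAt v v' t) :
    HasDerivAt (fun s => mink (u s) (v s)) (mink u' (v t) + mink (u t) v') t := by
  have hu' : ∀ i, HasDerivAt (fun s => u s i) (u' i) t := hasDerivAt_pi.1 hu
  have hv' : ∀ i, HasDerivAt (fun s => v s i) (v' i) t := hasDerivAt_pi.1 hv
  have h := ((((((hu' 0).mul (hv' 0)).neg.add ((hu' 1).mul (hv' 1))).add
      ((hu' 2).mul (hv' 2))).add ((hu' 3).mul (hv' 3))))
  exact h.congr_deriv (by simp only [mink]; ring)

lemma deriv_eq_zero_of_const {f : ℝ → ℝ} {c : ℝ} (h : ∀ t, f t = c) {D t : ℝ}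
    (hD : HasDerivAt f D t) : D = 0 := by
  have hf : f = fun _ => c := funext h
  exact (hf ▸ hD).unique (hasDerivAt_const t c)

lemma spacelike_of_orthogonal_timelike (w v : Fin 4 → ℝ) (hw : mink w w < 0)
    (ho : mink v w = 0) (hv : v ≠ 0) : 0 < mink v v := by
  simp only [mink] at hw ho ⊢
  have hQ : 0 ≤ w 1 * w 1 + w 2 * w 2 + w 3 * w 3 :=
    add_nonneg (add_nonneg (mul_self_nonneg _) (mul_self_nonneg _)) (mul_self_nonneg _)
  have hp2 : 0 < w 0 * w 0 := by nlinarith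
  by_cases hb : v 1 * v 1 + v 2 * v 2 + v 3 * v 3 = 0
  · exfalso
    have h1 : v 1 = 0 := by nlinarith [mul_self_nonneg (v 1), mul_self_nonneg (v 2), mul_self_nonneg (v 3)]
    have h2 : v 2 = 0 := by nlinarith [mul_self_nonneg (v 1), mul_self_nonneg (v 2), mul_self_nonneg (v 3)]
    have h3 : v 3 = 0 := by nlinarith [mul_self_nonneg (v 1), mul_self_nonneg (v 2), mul_self_nonneg (v 3)]
    rw [h1, h2, h3] at ho
    have h0 : v 0 = 0 := by
      have hz : v 0 * w 0 = 0 := by linarith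
      rcases mul_eq_zero.1 hz with h | h
      · exact h
      · exact absurd h (by nlinarith)
    exact hv (funext fun i => by fin_cases i <;> assumption)
  · have hBnn : 0 ≤ v 1 * v 1 + v 2 * v 2 + v 3 * v 3 :=
      add_nonneg (add_nonneg (mul_self_nonneg _) (mul_self_nonneg _)) (mul_self_nonneg _)
    have hb' : 0 < v 1 * v 1 + v 2 * v 2 + v 3 * v 3 := lt_of_le_of_ne hBnn (Ne.symm hb)
    by_contra hcon
    push_neg at hcon
    have cs : (v 1 * w 1 + v 2 * w 2 + v 3 * w 3) ^ 2 ≤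
        (v 1 * v 1 + v 2 * v 2 + v 3 * v 3) * (w 1 * w 1 + w 2 * w 2 + w 3 * w 3) := by
      nlinarith [sq_nonneg (v 1 * w 2 - v 2 * w 1), sq_nonneg (v 1 * w 3 - v 3 * w 1),
        sq_nonneg (v 2 * w 3 - v 3 * w 2)]
    have ho' : v 0 * w 0 = v 1 * w 1 + v 2 * w 2 + v 3 * w 3 := by linarith
    have hsq : (v 0 * w 0) ^ 2 ≤
        (v 1 * v 1 + v 2 * v 2 + v 3 * v 3) * (w 1 * w 1 + w 2 * w 2 + w 3 * w 3) := by
      rw [ho']; exact cs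
    have t1 : 0 < (v 1 * v 1 + v 2 * v 2 + v 3 * v 3) *
        (w 0 * w 0 - (w 1 * w 1 + w 2 * w 2 + w 3 * w 3)) :=
      mul_pos hb' (by linarith)
    have t2 : 0 ≤ (v 0 * v 0 - (v 1 * v 1 + v 2 * v 2 + v 3 * v 3)) * (w 0 * w 0) :=
      mul_nonneg (by linarith) hp2.le
    nlinarith [hsq, t1, t2]

/-- Theorem 1.2: a null Cartan curve parametrized by pseudo-arc fully lies on a
pseudo-sphere iff there exists a fixed point `A` such that
`⟨A - γ(t), γ'(t)⟩ = 0` for all `t`. -/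
theorem pseudoSpherical_iff_fixedPoint (γ : ℝ → (Fin 4 → ℝ))
    (hγ : ContDiff ℝ (⊤ : ℕ∞) γ)
    (hnull : ∀ t, mink (deriv γ t) (deriv γ t) = 0)
    (hpseudoArc : ∀ t,
      mink (deriv (deriv γ) t) (deriv (deriv γ) t) = 1)
    (hCartan : ∀ t, LinearIndependent ℝ
      ![deriv γ t, deriv (deriv γ) t, deriv (deriv (deriv γ)) t]) :
    (∃ m : Fin 4 → ℝ, ∃ r : ℝ, 0 < r ∧
        ∀ t, mink (γ t - m) (γ t - m) = r ^ 2) ↔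
      (∃ A : Fin 4 → ℝ, ∀ t, mink (A - γ t) (deriv γ t) = 0) := by
  -- basic differentiability
  have h0 : ContDiff ℝ (↑(⊤ : ℕ∞)) γ := hγ.of_le (by simp)
  have h1 : ContDiff ℝ (↑(⊤ : ℕ∞)) (deriv γ) := (contDiff_infty_iff_deriv.1 h0).2
  have h2 : ContDiff ℝ (↑(⊤ : ℕ∞)) (deriv (deriv γ)) := (contDiff_infty_iff_deriv.1 h1).2
  have hdγ : ∀ t, HasDerivAt γ (deriv γ t) t :=
    fun t => ((h0.differentiable (by simp)) t).hasDerivAt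
  have hd1 : ∀ t, HasDerivAt (deriv γ) (deriv (deriv γ) t) t :=
    fun t => ((h1.differentiable (by simp)) t).hasDerivAt
  have hd2 : ∀ t, HasDerivAt (deriv (deriv γ)) (deriv (deriv (deriv γ)) t) t :=
    fun t => ((h2.differentiable (by simp)) t).hasDerivAt
  constructor
  · rintro ⟨m, r, hr, hsph⟩
    refine ⟨m, fun t => ?_⟩
    have hu : HasDerivAt (fun s => γ s - m) (deriv γ t) t := (hdγ t).sub_const m
    have hD := hasDerivAt_mink hu hu
    have hz := deriv_eq_zero_of_const hsph hD
    simp only [mink, Pi.sub_apply] at hz ⊢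
    ring_nf at hz ⊢
    linarith
  · rintro ⟨A, hA⟩
    set v : ℝ → Fin 4 → ℝ := fun t => A - γ t with hvdef
    have hdv : ∀ t, HasDerivAt v (-(deriv γ t)) t :=
      fun t => (hdγ t).const_sub A
    have P2 : ∀ t, mink (v t) (deriv (deriv γ) t) = 0 := by
      intro t
      have hD := hasDerivAt_mink (hdv t) (hd1 t)
      have hz := deriv_eq_zero_of_const hA hD
      have hn := hnull t
      simp only [mink, Pi.neg_apply, Pi.sub_apply] at hz hn ⊢
      ring_nf at hz hn ⊢
      linarith
    have Q1 : ∀ t, mink (deriv γ t) (deriv (deriv γ) t) = 0 := by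
      intro t
      have hD := hasDerivAt_mink (hd1 t) (hd1 t)
      have hz := deriv_eq_zero_of_const hnull hD
      simp only [mink] at hz ⊢
      ring_nf at hz ⊢
      linarith
    have P3 : ∀ t, mink (v t) (deriv (deriv (deriv γ)) t) = 0 := by
      intro t
      have hD := hasDerivAt_mink (hdv t) (hd2 t)
      have hz := deriv_eq_zero_of_const P2 hD
      have hq := Q1 t
      simp only [mink, Pi.neg_apply, Pi.sub_apply] at hz hq ⊢
      ring_nf at hz hq ⊢
      linarith
    have Q2 : ∀ t, mink (deriv γ t) (deriv (deriv (deriv γ)) t) = -1 := by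
      intro t
      have hD := hasDerivAt_mink (hd1 t) (hd2 t)
      have hz := deriv_eq_zero_of_const Q1 hD
      have hp := hpseudoArc t
      simp only [mink] at hz hp ⊢
      ring_nf at hz hp ⊢
      linarith
    have hconst : ∀ t, mink (v t) (v t) = mink (v 0) (v 0) := by
      intro t
      refine is_const_of_deriv_eq_zero (f := fun s => mink (v s) (v s)) (fun s => ?_) (fun s => ?_) t 0
      · exact (hasDerivAt_mink (hdv s) (hdv s)).differentiableAt
      · have hD := hasDerivAt_mink (hdv s) (hdv s)
        rw [hD.deriv]
        have hp := hA s
        simp only [mink, hvdef, Pi.neg_apply, Pi.sub_apply] at hp ⊢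
        ring_nf at hp ⊢
        linarith
    set c : ℝ := mink (v 0) (v 0) with hcdef
    have hkey : ∀ t, v t = 0 ∨ 0 < mink (v t) (v t) := by
      intro t
      by_cases hvt : v t = 0
      · exact Or.inl hvt
      · refine Or.inr ?_
        set μ : ℝ := mink (deriv (deriv (deriv γ)) t) (deriv (deriv (deriv γ)) t) with hμ
        set w : Fin 4 → ℝ := fun i => ((μ + 2) / 2) * deriv γ t i + deriv (deriv (deriv γ)) t i
          with hwdef
        have hww : mink w w = -2 := by
          have e : mink w w = ((μ + 2) / 2) * (((μ + 2) / 2) *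
              mink (deriv γ t) (deriv γ t)) + 2 * (((μ + 2) / 2) *
              mink (deriv γ t) (deriv (deriv (deriv γ)) t)) + μ := by
            simp only [mink, hwdef, hμ]; ring
          rw [e, hnull t, Q2 t]; ring
        have hvw : mink (v t) w = 0 := by
          have e : mink (v t) w = ((μ + 2) / 2) * mink (v t) (deriv γ t) +
              mink (v t) (deriv (deriv (deriv γ)) t) := by
            simp only [mink, hwdef]; ring
          rw [e, hA t, P3 t]; ring
        exact spacelike_of_orthogonal_timelike w (v t) (by rw [hww]; norm_num) hvw hvt
    have hcpos : 0 < c := by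
      rcases hkey 0 with h | h
      · exfalso
        have hvz : ∀ t, v t = 0 := by
          intro t
          rcases hkey t with h' | h'
          · exact h'
          · rw [hconst t, hcdef, h] at h'
            simp [mink] at h'
        have hγc : γ = fun _ => A := by
          funext t i
          have hz := congrFun (hvz t) i
          simp only [hvdef, Pi.sub_apply, Pi.zero_apply] at hz
          linarith
        have hder : deriv γ 0 = 0 := by
          rw [hγc]
          simp
        have hne := (hCartan 0).ne_zero 0
        simp [hder] at hne
      · rw [hcdef]; exact h
    refine ⟨A, Real.sqrt c, Real.sqrt_pos.2 hcpos, fun t => ?_⟩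
    have e : mink (γ t - A) (γ t - A) = mink (v t) (v t) := by
      simp only [mink, hvdef, Pi.sub_apply]
      ring
    rw [e, hconst t, Real.sq_sqrt hcpos.le]
end
end
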